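/- arXiv:2007.15057 — 4 statements merged into one kernel-verified Lean document; each statement's English description precedes it below -/
import Mathlib

section
/- For any continuous function f on [-1, 1], the substitution x = tanh((π/2)·sinh(t)) gives ∫_{-1}^{1} f(x) dx = ∫_{-∞}^{∞} f(tanh((π/2)·sinh(t))) · (π/2)·cosh(t)/cosh((π/2)·sinh(t))² dt. -/
/-!
The map `t ↦ tanh (c sinh t)`, `c > 0`, is a differentiable monotone bijection of `ℝ` onto
`(-1, 1)` with derivative `c cosh t / cosh² (c sinh t)`, so the identity is the one-dimensional
change of variables formula for monotone maps.
-/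

open Real MeasureTheory Set

theorem Real.hasDerivAt_tanh (x : ℝ) : HasDerivAt tanh (1 / cosh x ^ 2) x := by
  have h := (hasDerivAt_sinh x).div (hasDerivAt_cosh x) (cosh_pos x).ne'
  rw [show cosh x * cosh x - sinh x * sinh x = 1 by nlinarith [cosh_sq_sub_sinh_sq x]] at h
  rwa [show sinh / cosh = tanh from funext fun y ↦ (tanh_eq_sinh_div_cosh y).symm] at h

theorem Real.range_tanh : range tanh = Ioo (-1) 1 := by
  rw [← image_univ, tanh_bijOn.image_eq]

/-- No integrability of `f` is needed: when `f` is not integrable, neither is `φ' • f ∘ φ`, and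
both integrals are `0`. -/
theorem intervalIntegral_eq_integral_deriv_smul_of_range_eq_Ioo {E : Type*}
    [NormedAddCommGroup E] [NormedSpace ℝ E] {φ φ' : ℝ → ℝ} {a b : ℝ}
    (hφ : ∀ t, HasDerivAt φ (φ' t) t) (hφ'_nonneg : ∀ t, 0 ≤ φ' t)
    (hrange : range φ = Ioo a b) (f : ℝ → E) :
    ∫ x in a..b, f x = ∫ t, φ' t • f (φ t) := by
  have hab : a ≤ b := by
    obtain ⟨h₁, h₂⟩ : φ 0 ∈ Ioo a b := hrange ▸ mem_range_self 0
    linarith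
  have hmono : MonotoneOn φ univ :=
    (monotone_of_deriv_nonneg (fun t ↦ (hφ t).differentiableAt)
      (fun t ↦ (hφ t).deriv ▸ hφ'_nonneg t)).monotoneOn univ
  have hcov := integral_image_eq_integral_deriv_smul_of_monotoneOn MeasurableSet.univ
    (fun t _ ↦ (hφ t).hasDerivWithinAt) hmono f
  rw [image_univ, hrange, Measure.restrict_univ] at hcov
  rw [intervalIntegral.integral_of_le hab, integral_Ioc_eq_integral_Ioo, hcov]

theorem hasDerivAt_tanh_const_mul_sinh (c t : ℝ) :
    HasDerivAt (fun t ↦ tanh (c * sinh t)) (c * cosh t / cosh (c * sinh t) ^ 2) t := by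
  have h := (hasDerivAt_tanh (c * sinh t)).comp t ((hasDerivAt_sinh t).const_mul c)
  rwa [one_div_mul_eq_div] at h

theorem range_tanh_const_mul_sinh {c : ℝ} (hc : c ≠ 0) :
    range (fun t ↦ tanh (c * sinh t)) = Ioo (-1) 1 := by
  have hsurj : Function.Surjective (fun t ↦ c * sinh t) :=
    (mul_left_surjective₀ hc).comp sinh_surjective
  rw [← range_tanh, ← hsurj.range_comp tanh]
  rfl

theorem tanh_sinh_substitution_general (f : ℝ → ℝ) :
    ∫ x in (-1 : ℝ)..1, f x =
      ∫ t : ℝ, f (Real.tanh (π / 2 * Real.sinh t)) *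
        (π / 2 * Real.cosh t / (Real.cosh (π / 2 * Real.sinh t)) ^ 2) := by
  rw [intervalIntegral_eq_integral_deriv_smul_of_range_eq_Ioo
    (hasDerivAt_tanh_const_mul_sinh (π / 2)) (fun t ↦ by positivity)
    (range_tanh_const_mul_sinh (by positivity)) f]
  simp_rw [smul_eq_mul, mul_comm]

theorem tanh_sinh_substitution (f : ℝ → ℝ) (hf : ContinuousOn f (Set.Icc (-1 : ℝ) 1)) :
    ∫ x in (-1 : ℝ)..1, f x =
      ∫ t : ℝ, f (Real.tanh (π / 2 * Real.sinh t)) *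
        (π / 2 * Real.cosh t / (Real.cosh (π / 2 * Real.sinh t)) ^ 2) :=
  tanh_sinh_substitution_general f
end

section
/- The function N ↦ (2/N)·W(πN), where W is the Lambert W function (principal branch), is strictly decreasing for real N ≥ 1. -/
open Real

theorem h_opt_strictAnti (W : ℝ → ℝ)
    (hW : ∀ z : ℝ, 0 ≤ z → 0 ≤ W z ∧ W z * Real.exp (W z) = z) :
    StrictAntiOn (fun N : ℝ => 2 / N * W (π * N)) (Set.Ici (1 : ℝ)) := by
  intro x hx y hy hxy
  have hx1 : (1:ℝ) ≤ x := hx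
  have hy1 : (1:ℝ) ≤ y := hy
  have hxpos : 0 < x := lt_of_lt_of_le one_pos hx1
  have hypos : 0 < y := lt_of_lt_of_le one_pos hy1
  have hπ : (0:ℝ) < π := Real.pi_pos
  obtain ⟨ha0, hax⟩ := hW (π * x) (by positivity)
  obtain ⟨hb0, hay⟩ := hW (π * y) (by positivity)
  set a := W (π * x) with hadef
  set b := W (π * y) with hbdef
  have hapos : 0 < a := by
    rcases lt_or_eq_of_le ha0 with h | h
    · exact h
    · exfalso
      have : (0:ℝ) < π * x := by positivity
      rw [← hax, ← h] at this
      simp at this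
  have hbpos : 0 < b := by
    rcases lt_or_eq_of_le hb0 with h | h
    · exact h
    · exfalso
      have : (0:ℝ) < π * y := by positivity
      rw [← hay, ← h] at this
      simp at this
  have hab : a < b := by
    by_contra h
    push_neg at h
    have hle : b * Real.exp b ≤ a * Real.exp a :=
      mul_le_mul h (Real.exp_le_exp.mpr h) (Real.exp_pos b).le ha0
    rw [hax, hay] at hle
    nlinarith
  have hea : Real.exp a < Real.exp b := Real.exp_lt_exp.mpr hab
  simp only
  rw [div_mul_eq_mul_div, div_mul_eq_mul_div, div_lt_div_iff₀ hypos hxpos]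
  nlinarith [mul_lt_mul_of_pos_left hea (mul_pos hapos hbpos), mul_pos hapos hbpos]
end

section
/- For the trapezoidal-rule approximation of ∫_ℝ g(t) dt where g(t) = Ψ'(t)·f(Ψ(t)) with f bounded by M on [-1,1], the truncation error satisfies |∑_{|i|>n} h·g(ih)| ≤ M·h·∑_{|i|>n} Ψ'(ih) ≤ 2M·h·∑_{i>n} 2π·cosh(ih)·exp(-π·sinh(ih)), which is finite for every h > 0. -/
set_option maxHeartbeats 1000000
open Real

noncomputable def Psi (t : ℝ) : ℝ := Real.tanh (π / 2 * Real.sinh t)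

noncomputable def Psi' (t : ℝ) : ℝ :=
  π / 2 * Real.cosh t / (Real.cosh (π / 2 * Real.sinh t)) ^ 2

lemma psi'_pos (t : ℝ) : 0 < Psi' t := by
  unfold Psi'
  exact div_pos (mul_pos (by positivity) (Real.cosh_pos _)) (pow_pos (Real.cosh_pos _) 2)

lemma psi'_even (t : ℝ) : Psi' (-t) = Psi' t := by
  unfold Psi'
  rw [Real.sinh_neg, Real.cosh_neg, mul_neg, Real.cosh_neg]

lemma psi_mem (t : ℝ) : Psi t ∈ Set.Ioo (-1 : ℝ) 1 := by
  unfold Psi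
  have h1 : |Real.tanh (π / 2 * Real.sinh t)| < 1 := by
    set u := π / 2 * Real.sinh t
    rw [Real.tanh_eq_sinh_div_cosh, abs_div, abs_of_pos (Real.cosh_pos _),
      div_lt_one (Real.cosh_pos _)]
    have := Real.cosh_sq_sub_sinh_sq u
    nlinarith [abs_nonneg (Real.sinh u), sq_abs (Real.sinh u), Real.cosh_pos (x := u),
      abs_nonneg (Real.sinh u)]
  constructor
  · linarith [neg_abs_le (Real.tanh (π / 2 * Real.sinh t))]
  · linarith [le_abs_self (Real.tanh (π / 2 * Real.sinh t))]

lemma psi'_le (t : ℝ) : Psi' t ≤ 2 * π * Real.cosh t * Real.exp (-(π * Real.sinh t)) := by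
  unfold Psi'
  set u := π / 2 * Real.sinh t with hu
  have hc : Real.exp u / 2 ≤ Real.cosh u := by
    rw [Real.cosh_eq]
    have := Real.exp_pos (-u)
    linarith
  have h2 : (Real.exp u / 2) ^ 2 ≤ (Real.cosh u) ^ 2 := by
    apply pow_le_pow_left₀ (by positivity) hc
  have hnum : 0 ≤ π / 2 * Real.cosh t := by positivity
  have := div_le_div_of_nonneg_left hnum (by positivity : (0:ℝ) < (Real.exp u / 2) ^ 2) h2
  refine le_trans this ?_
  have hpow : (Real.exp u / 2) ^ 2 = Real.exp (2 * u) / 4 := by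
    rw [div_pow, sq, ← Real.exp_add, two_mul]
    norm_num
  rw [hpow]
  rw [div_div_eq_mul_div, div_le_iff₀ (by positivity)]
  have h2u : 2 * u = π * Real.sinh t := by rw [hu]; ring
  rw [h2u, Real.exp_neg]
  have hep : 0 < Real.exp (π * Real.sinh t) := Real.exp_pos _
  field_simp
  ring_nf
  nlinarith [Real.cosh_pos (x := t), Real.pi_pos]

theorem truncation_error_bound (h : ℝ) (hh : 0 < h) (n : ℕ) (f : ℝ → ℝ) (M : ℝ)
    (hf : ∀ x ∈ Set.Ioo (-1 : ℝ) 1, |f x| ≤ M) :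
    Summable (fun i : ℕ =>
        2 * π * Real.cosh (((n : ℝ) + 1 + i) * h) *
          Real.exp (-(π * Real.sinh (((n : ℝ) + 1 + i) * h)))) ∧
    Summable (fun i : ℕ =>
        Psi' (((n : ℝ) + 1 + i) * h) + Psi' (-(((n : ℝ) + 1 + i) * h))) ∧
    |∑' i : ℕ, h * (Psi' (((n : ℝ) + 1 + i) * h) * f (Psi (((n : ℝ) + 1 + i) * h)) +
        Psi' (-(((n : ℝ) + 1 + i) * h)) * f (Psi (-(((n : ℝ) + 1 + i) * h))))| ≤
      M * h * ∑' i : ℕ, (Psi' (((n : ℝ) + 1 + i) * h) + Psi' (-(((n : ℝ) + 1 + i) * h))) ∧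
    M * h * ∑' i : ℕ, (Psi' (((n : ℝ) + 1 + i) * h) + Psi' (-(((n : ℝ) + 1 + i) * h))) ≤
      2 * M * h * ∑' i : ℕ,
        2 * π * Real.cosh (((n : ℝ) + 1 + i) * h) *
          Real.exp (-(π * Real.sinh (((n : ℝ) + 1 + i) * h))) := by
  set x : ℕ → ℝ := fun i => ((n : ℝ) + 1 + i) * h with hx
  have hxpos : ∀ i, 0 < x i := fun i => by
    apply mul_pos _ hh
    positivity
  have hM : 0 ≤ M := le_trans (abs_nonneg _) (hf 0 (by norm_num))
  set a : ℕ → ℝ := fun i => 2 * π * Real.cosh (x i) * Real.exp (-(π * Real.sinh (x i)))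
    with ha
  -- summability of a
  have hsa : Summable a := by
    have hgs : Summable (fun i : ℕ =>
        (2 * π * Real.exp ((1 - π) * (((n:ℝ)+1) * h))) * Real.exp ((1 - π) * h) ^ i) := by
      apply Summable.mul_left
      apply summable_geometric_of_lt_one (Real.exp_pos _).le
      rw [Real.exp_lt_one_iff]
      nlinarith [Real.pi_gt_three]
    apply Summable.of_nonneg_of_le (fun i => by positivity) _ hgs
    · intro i
      have hxi := (hxpos i).le
      have hcosh : Real.cosh (x i) ≤ Real.exp (x i) := by
        rw [Real.cosh_eq]
        have h1 : Real.exp (-(x i)) ≤ Real.exp (x i) :=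
          Real.exp_le_exp.2 (by linarith)
        linarith
      have hsinh : x i ≤ Real.sinh (x i) := (Real.self_le_sinh_iff).2 hxi
      have hexp : Real.exp (-(π * Real.sinh (x i))) ≤ Real.exp (-(π * x i)) := by
        apply Real.exp_le_exp.2
        have := Real.pi_pos
        nlinarith
      calc a i ≤ 2 * π * Real.exp (x i) * Real.exp (-(π * x i)) := by
            apply mul_le_mul (by nlinarith [Real.pi_pos]) hexp (Real.exp_pos _).le
            positivity
        _ = (2 * π * Real.exp ((1 - π) * (((n:ℝ)+1) * h))) * Real.exp ((1 - π) * h) ^ i := by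
            rw [← Real.exp_nat_mul, mul_assoc, mul_assoc, ← Real.exp_add,
              mul_assoc (2 * π), ← Real.exp_add]
            rw [show (2:ℝ) * (π * rexp (x i + -(π * x i))) = 2 * π * rexp (x i + -(π * x i))
              by ring]
            congr 1
            simp only [hx]
            push_cast
            ring
  set b : ℕ → ℝ := fun i => Psi' (x i) + Psi' (-(x i)) with hb
  have hble : ∀ i, b i ≤ 2 * a i := by
    intro i
    simp only [hb, psi'_even]
    have := psi'_le (x i)
    simp only [ha]
    linarith
  have hbnn : ∀ i, 0 ≤ b i := fun i => by
    have := psi'_pos (x i); have := psi'_pos (-(x i)); simp only [hb]; linarith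
  have hsb : Summable b :=
    Summable.of_nonneg_of_le hbnn hble (hsa.mul_left 2)
  refine ⟨hsa, hsb, ?_, ?_⟩
  · -- abs tsum ≤ M h tsum b
    set g : ℕ → ℝ := fun i => h * (Psi' (x i) * f (Psi (x i)) +
        Psi' (-(x i)) * f (Psi (-(x i)))) with hg
    have hgle : ∀ i, |g i| ≤ M * h * b i := by
      intro i
      simp only [hg, hb, abs_mul, abs_of_pos hh]
      rw [mul_comm M h, mul_assoc]
      apply mul_le_mul_of_nonneg_left _ hh.le
      calc |Psi' (x i) * f (Psi (x i)) + Psi' (-(x i)) * f (Psi (-(x i)))|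
          ≤ |Psi' (x i) * f (Psi (x i))| + |Psi' (-(x i)) * f (Psi (-(x i)))| := abs_add_le _ _
        _ ≤ Psi' (x i) * M + Psi' (-(x i)) * M := by
            apply add_le_add
            · rw [abs_mul, abs_of_pos (psi'_pos _)]
              exact mul_le_mul_of_nonneg_left (hf _ (psi_mem _)) (psi'_pos _).le
            · rw [abs_mul, abs_of_pos (psi'_pos _)]
              exact mul_le_mul_of_nonneg_left (hf _ (psi_mem _)) (psi'_pos _).le
        _ = M * (Psi' (x i) + Psi' (-(x i))) := by ring
    have hsg : Summable g := by
      apply Summable.of_norm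
      exact Summable.of_nonneg_of_le (fun i => norm_nonneg _) hgle (hsb.mul_left (M * h))
    calc |∑' i, g i| ≤ ∑' i, |g i| := by
          simpa using norm_tsum_le_tsum_norm (f := g) (by simpa using hsg.abs)
      _ ≤ ∑' i, M * h * b i := Summable.tsum_le_tsum hgle hsg.abs (hsb.mul_left (M * h))
      _ = M * h * ∑' i, b i := by rw [tsum_mul_left]
  · rw [show 2 * M * h * ∑' i, a i = M * h * ∑' i, 2 * a i by rw [tsum_mul_left]; ring]
    apply mul_le_mul_of_nonneg_left _ (by positivity)
    exact Summable.tsum_le_tsum hble hsb (hsa.mul_left 2)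
end

section
/- If 0 < h and n·h ≤ arcsinh(ln(2/ε - 1)/π) for some ε ∈ (0,1), then the abscissa x_n = tanh((π/2)·sinh(n·h)) satisfies 1 - x_n ≥ ε. -/
/-!
The abscissa map `Ψ t = tanh (π / 2 * sinh t)` is strictly increasing with inverse
`y ↦ arsinh (2 * artanh y / π)` on `(-1, 1)`, and `2 * artanh (1 - ε) = log (2 / ε - 1)`.
So the window bound is exactly `n * h ≤ Ψ⁻¹ (1 - ε)`, and monotonicity gives `Ψ (n * h) ≤ 1 - ε`.
-/

open Real Set

namespace Real

theorem tanh_strictMono : StrictMono tanh := fun x y hxy =>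
  (artanh_lt_artanh_iff ⟨neg_one_lt_tanh x, tanh_lt_one x⟩ ⟨neg_one_lt_tanh y, tanh_lt_one y⟩).mp
    (by rwa [artanh_tanh, artanh_tanh])

theorem two_mul_artanh_one_sub {ε : ℝ} (hε0 : 0 < ε) (hε2 : ε ≤ 2) :
    2 * artanh (1 - ε) = log (2 / ε - 1) := by
  rw [artanh_eq_half_log ⟨by linarith, by linarith⟩, div_sub_one hε0.ne']
  ring_nf

end Real

noncomputable def tanhSinh (t : ℝ) : ℝ := tanh (π / 2 * sinh t)

noncomputable def tanhSinhInv (y : ℝ) : ℝ := arsinh (2 * artanh y / π)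

theorem tanhSinh_strictMono : StrictMono tanhSinh :=
  tanh_strictMono.comp ((strictMono_mul_left_of_pos (by positivity)).comp sinh_strictMono)

theorem tanhSinh_tanhSinhInv {y : ℝ} (hy : y ∈ Ioo (-1) 1) : tanhSinh (tanhSinhInv y) = y := by
  rw [tanhSinh, tanhSinhInv, sinh_arsinh,
    show π / 2 * (2 * artanh y / π) = artanh y by field_simp, tanh_artanh hy]

theorem tanhSinhInv_one_sub {ε : ℝ} (hε0 : 0 < ε) (hε2 : ε ≤ 2) :
    tanhSinhInv (1 - ε) = arsinh (log (2 / ε - 1) / π) := by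
  rw [tanhSinhInv, two_mul_artanh_one_sub hε0 hε2]

theorem underflow_avoidance_general (h : ℝ) (n : ℕ) (ε : ℝ) (hε0 : 0 < ε) (hε1 : ε < 1)
    (hwin : (n : ℝ) * h ≤ Real.arsinh (Real.log (2 / ε - 1) / π)) :
    ε ≤ 1 - Real.tanh (π / 2 * Real.sinh ((n : ℝ) * h)) := by
  rw [← tanhSinhInv_one_sub hε0 (by linarith)] at hwin
  suffices tanhSinh (n * h) ≤ 1 - ε from le_sub_comm.mp this
  calc tanhSinh (n * h) ≤ tanhSinh (tanhSinhInv (1 - ε)) := tanhSinh_strictMono.monotone hwin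
    _ = 1 - ε := tanhSinh_tanhSinhInv ⟨by linarith, by linarith⟩

theorem underflow_avoidance (h : ℝ) (hh : 0 < h) (n : ℕ) (ε : ℝ) (hε0 : 0 < ε) (hε1 : ε < 1)
    (hwin : (n : ℝ) * h ≤ Real.arsinh (Real.log (2 / ε - 1) / π)) :
    ε ≤ 1 - Real.tanh (π / 2 * Real.sinh ((n : ℝ) * h)) :=
  underflow_avoidance_general h n ε hε0 hε1 hwin
end
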